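/- For forecasts 0 < p < q < 1, the set {π ∈ [0,1] : E_π[S_θ(p,Y) − S_θ(q,Y)] ≤ 0 for all θ ∈ [0,1]} equals [0, p]. -/

import Mathlib

/-- The elementary scoring function `S_θ(p,y) = (θ − y)(1{p > θ} − 1{y > θ})`. -/
noncomputable def elemScore (θ p y : ℝ) : ℝ :=
  (θ - y) * ((if θ < p then (1 : ℝ) else 0) - (if θ < y then (1 : ℝ) else 0))

/-! Switching the forecast from `p` to `q` only changes the score at thresholds `θ ∈ [p, q)`,
and there by `Y − θ`. So the expected score difference under `Bernoulli π` is `π − θ` on `[p, q)`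
and `0` elsewhere; it is nonpositive for every threshold exactly when `π` is a lower bound of
`[p, q)`, i.e. `π ≤ p`. -/

open Set

theorem elemScore_sub_elemScore {p q : ℝ} (hpq : p ≤ q) (θ y : ℝ) :
    elemScore θ p y - elemScore θ q y = (Ico p q).indicator (fun θ => y - θ) θ := by
  simp only [elemScore, indicator_apply, mem_Ico]
  split_ifs <;> grind

theorem bernoulli_expectation_elemScore_sub_elemScore {p q : ℝ} (hpq : p ≤ q) (π θ : ℝ) :
    (1 - π) * (elemScore θ p 0 - elemScore θ q 0) + π * (elemScore θ p 1 - elemScore θ q 1) =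
      (Ico p q).indicator (fun θ => π - θ) θ := by
  simp only [elemScore_sub_elemScore hpq, indicator_apply]
  split_ifs <;> ring

theorem forall_indicator_sub_nonpos_iff {p q π : ℝ} {s : Set ℝ} (hpq : p < q)
    (hs : Ico p q ⊆ s) :
    (∀ θ ∈ s, (Ico p q).indicator (fun θ => π - θ) θ ≤ 0) ↔ π ≤ p := by
  rw [← mem_Iic, ← (isLeast_Ico hpq).lowerBounds_eq]
  constructor
  · intro h θ hθ
    simpa [indicator_of_mem hθ] using h θ (hs hθ)
  · intro h θ _
    exact indicator_apply_nonpos fun hθ => sub_nonpos.mpr (h hθ)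

/-- For `0 < p < q < 1`, the set of `π ∈ [0,1]` for which the expected
elementary score difference `E_π[S_θ(p,Y) − S_θ(q,Y)]` is nonpositive for all
`θ ∈ [0,1]` equals `[0, p]`. -/
theorem all_elementary_scores_null (p q : ℝ) (hp : 0 < p) (hpq : p < q)
    (hq : q < 1) :
    {π ∈ Set.Icc (0 : ℝ) 1 | ∀ θ ∈ Set.Icc (0 : ℝ) 1,
        (1 - π) * (elemScore θ p 0 - elemScore θ q 0)
          + π * (elemScore θ p 1 - elemScore θ q 1) ≤ 0}
      = Set.Icc 0 p := by
  have hIco : Ico p q ⊆ Icc 0 1 := Ico_subset_Icc_self.trans (Icc_subset_Icc hp.le hq.le)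
  ext π
  simp only [mem_sep_iff, bernoulli_expectation_elemScore_sub_elemScore hpq.le]
  rw [forall_indicator_sub_nonpos_iff hpq hIco]
  simp only [mem_Icc]
  constructor
  · rintro ⟨⟨hπ0, -⟩, hπp⟩
    exact ⟨hπ0, hπp⟩
  · rintro ⟨hπ0, hπp⟩
    exact ⟨⟨hπ0, hπp.trans (hpq.trans hq).le⟩, hπp⟩
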